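/- Let p̄ ∈ Δ(n), β ∈ (0,1), α > 0, and let P be a Δ(n)-valued random vector with P(‖P − p̄‖_∞ ≤ α) ≥ 1 − β. Then E[P] belongs to the set 𝒫̂ = {βp₁ + (1−β)p₂ : p₁, p₂ ∈ Δ(n), ‖p₂ − p̄‖_∞ ≤ α}. -/

import Mathlib

open MeasureTheory

/-! On the event `A = {‖P - p̄‖∞ ≤ α}` the mean splits as `E[P] = μ(A) • q + (1 - μ(A)) • r`,
where `q`, the average of `P` over `A`, lies in `Δ(n)` within `α` of `p̄`, and `r ∈ Δ(n)`.
As `μ(A) ≥ 1 - β`, the surplus weight `μ(A) - (1 - β)` on `q` can be moved together with `r`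
into the `β`-part, which stays in `Δ(n)` by convexity. -/

theorem Convex.exists_smul_add_smul_eq_of_le {E : Type*} [AddCommGroup E] [Module ℝ E]
    {s : Set E} (hs : Convex ℝ s) {q r : E} (hq : q ∈ s) (hr : r ∈ s) {β γ : ℝ} (hβ : 0 < β)
    (hγβ : 1 - β ≤ γ) (hγ : γ ≤ 1) :
    ∃ p ∈ s, β • p + (1 - β) • q = γ • q + (1 - γ) • r := by
  refine ⟨((γ - (1 - β)) / β) • q + ((1 - γ) / β) • r,
    hs hq hr (by bound) (by bound) (by field_simp; ring), ?_⟩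
  rw [smul_add, smul_smul, smul_smul, mul_div_cancel₀ _ hβ.ne', mul_div_cancel₀ _ hβ.ne']
  module

section SetAverage

variable {Ω E : Type*} [MeasurableSpace Ω] {μ : Measure Ω} [NormedAddCommGroup E]
  [NormedSpace ℝ E] {f : Ω → E} {t : Set Ω}

theorem integral_eq_measureReal_smul_setAverage_add_compl [IsFiniteMeasure μ]
    (ht : NullMeasurableSet t μ) (hfi : Integrable f μ) :
    ∫ x, f x ∂μ = μ.real t • ⨍ x in t, f x ∂μ + μ.real tᶜ • ⨍ x in tᶜ, f x ∂μ := by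
  rw [measure_smul_setAverage _ (measure_ne_top μ t),
    measure_smul_setAverage _ (measure_ne_top μ _), integral_add_compl₀ ht hfi]

theorem exists_integral_eq_measureReal_smul_setAverage_add [IsProbabilityMeasure μ]
    [CompleteSpace E] {s : Set E} (hs : Convex ℝ s) (hsc : IsClosed s) (hfs : ∀ᵐ x ∂μ, f x ∈ s)
    (hfi : Integrable f μ) (ht : NullMeasurableSet t μ) :
    ∃ r ∈ s, ∫ x, f x ∂μ = μ.real t • ⨍ x in t, f x ∂μ + (1 - μ.real t) • r := by
  have hsplit := integral_eq_measureReal_smul_setAverage_add_compl ht hfi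
  rw [probReal_compl_eq_one_sub₀ ht] at hsplit
  have hmem : ∀ u : Set Ω, μ u ≠ 0 → ⨍ x in u, f x ∂μ ∈ s := fun u hu =>
    hs.set_average_mem hsc hu (measure_ne_top μ u) (ae_restrict_of_ae hfs) hfi.integrableOn
  by_cases hc : μ tᶜ = 0
  · -- the average over the null set `tᶜ` is a junk value, so take `r` to be the one over `t`
    have hμt : μ.real t = 1 := by
      linarith [probReal_compl_eq_one_sub₀ (μ := μ) ht,
        measureReal_eq_zero_iff (measure_ne_top μ _) |>.2 hc]
    refine ⟨⨍ x in t, f x ∂μ, hmem t fun h0 => by simp [measureReal_def, h0] at hμt, ?_⟩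
    simp [hsplit, hμt]
  · exact ⟨_, hmem _ hc, hsplit⟩

end SetAverage

theorem mem_closedBall_pi_iff {ι : Type*} [Fintype ι] {x y : ι → ℝ} {r : ℝ} (hr : 0 ≤ r) :
    x ∈ Metric.closedBall y r ↔ ∀ i, |x i - y i| ≤ r := by
  simp only [Metric.mem_closedBall, dist_pi_le_iff hr, Real.dist_eq]

theorem expectation_mem_uncertainty_set_general
    {Ω : Type*} [MeasurableSpace Ω] (μ : Measure Ω) [IsProbabilityMeasure μ]
    (n : ℕ) (P : Ω → Fin n → ℝ) (hPmeas : Measurable P)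
    (hPval : ∀ ω, P ω ∈ stdSimplex ℝ (Fin n))
    (hPint : ∀ i, Integrable (fun ω => P ω i) μ)
    (pbar : Fin n → ℝ)
    (β α : ℝ) (hβ : β ∈ Set.Ioo (0 : ℝ) 1) (hα : 0 < α)
    (hconc : (1 : ℝ) - β ≤ (μ {ω | ∀ i, |P ω i - pbar i| ≤ α}).toReal) :
    (fun i => ∫ ω, P ω i ∂μ) ∈
      {x : Fin n → ℝ | ∃ p₁ ∈ stdSimplex ℝ (Fin n), ∃ p₂ ∈ stdSimplex ℝ (Fin n),
        (∀ i, |p₂ i - pbar i| ≤ α) ∧ x = β • p₁ + (1 - β) • p₂} := by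
  set A := P ⁻¹' Metric.closedBall pbar α
  have hAmeas : MeasurableSet A := hPmeas Metric.isClosed_closedBall.measurableSet
  have hμA : 1 - β ≤ μ.real A := by
    rwa [show A = {ω | ∀ i, |P ω i - pbar i| ≤ α} from Set.ext fun ω =>
      mem_closedBall_pi_iff hα.le]
  have hμA0 : μ A ≠ 0 := fun h0 => by
    simp only [measureReal_def, h0, ENNReal.toReal_zero] at hμA
    linarith [hβ.2]
  have hPi : Integrable P μ := Integrable.of_eval hPint
  have hq : ⨍ ω in A, P ω ∂μ ∈ stdSimplex ℝ (Fin n) ∩ Metric.closedBall pbar α :=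
    ((convex_stdSimplex ℝ _).inter (convex_closedBall _ _)).set_average_mem
      ((isClosed_stdSimplex ℝ _).inter Metric.isClosed_closedBall) hμA0 (measure_ne_top μ A)
      ((ae_restrict_mem hAmeas).mono fun ω hω => ⟨hPval ω, hω⟩) hPi.integrableOn
  obtain ⟨r, hr, hsplit⟩ := exists_integral_eq_measureReal_smul_setAverage_add
    (convex_stdSimplex ℝ _) (isClosed_stdSimplex ℝ _) (ae_of_all μ hPval) hPi
    hAmeas.nullMeasurableSet
  obtain ⟨p, hp, hmix⟩ := (convex_stdSimplex ℝ _).exists_smul_add_smul_eq_of_le hq.1 hr hβ.1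
    hμA measureReal_le_one
  refine ⟨p, hp, _, hq.1, (mem_closedBall_pi_iff hα.le).1 hq.2, ?_⟩
  rw [hmix, ← hsplit]
  ext i
  exact (eval_integral hPint i).symm

theorem expectation_mem_uncertainty_set
    {Ω : Type*} [MeasurableSpace Ω] (μ : Measure Ω) [IsProbabilityMeasure μ]
    (n : ℕ) (P : Ω → Fin n → ℝ) (hPmeas : Measurable P)
    (hPval : ∀ ω, P ω ∈ stdSimplex ℝ (Fin n))
    (hPint : ∀ i, Integrable (fun ω => P ω i) μ)
    (pbar : Fin n → ℝ) (hpbar : pbar ∈ stdSimplex ℝ (Fin n))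
    (β α : ℝ) (hβ : β ∈ Set.Ioo (0 : ℝ) 1) (hα : 0 < α)
    (hconc : (1 : ℝ) - β ≤ (μ {ω | ∀ i, |P ω i - pbar i| ≤ α}).toReal) :
    (fun i => ∫ ω, P ω i ∂μ) ∈
      {x : Fin n → ℝ | ∃ p₁ ∈ stdSimplex ℝ (Fin n), ∃ p₂ ∈ stdSimplex ℝ (Fin n),
        (∀ i, |p₂ i - pbar i| ≤ α) ∧ x = β • p₁ + (1 - β) • p₂} :=
  expectation_mem_uncertainty_set_general μ n P hPmeas hPval hPint pbar β α hβ hα hconc
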